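/- arXiv:2211.03225 — 4 statements merged into one kernel-verified Lean document; each statement's English description precedes it below -/
import Mathlib

section
/- Suppose the transition system is finitely branching and well-founded (no infinite transition sequences from any state, as holds for bounded processes). Then A₀ ≁_b A₁ (A₀ and A₁ are not bisimilar) with A₀ ∼ A₁ statically equivalent if and only if there exists a witness of non-bisimilarity W containing (A₀, A₁): a set W of pairs of statically equivalent states such that for every (B₀, B₁) ∈ W, there is b ∈ {0,1} and a transition B_b →^α B'_b such that for every matching sequence B_{1-b} ⟹^ᾱ B'_{1-b}, either B'₀ ≁ B'₁ (not statically equivalent) or (B'₀, B'₁) ∈ W. -/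
/-!
Statically equivalent but non-bisimilar pairs form a witness themselves: were some such pair
to have no distinguishing transition, adding it (and its mirror image) to bisimilarity would
still give a bisimulation. Conversely, if a pair of a witness were related by a bisimulation,
matching its distinguishing transition would lead to another pair of the witness related by
the bisimulation, one transition further along one component and zero or more along the other.
Ordered lexicographically by the transition relation, such pairs would descend forever, which
well-foundedness rules out.
-/

/-- Weak traces: sequences of transitions whose visible-action word is `w`. -/
inductive WTrace {S A : Type*} (step : S → A → S → Prop) (τ : A) : S → List A → S → Prop
  | refl (s : S) : WTrace step τ s [] s
  | tau {s s' t : S} {w : List A} : step s τ s' → WTrace step τ s' w t → WTrace step τ s w t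
  | vis {s s' t : S} {a : A} {w : List A} :
      a ≠ τ → step s a s' → WTrace step τ s' w t → WTrace step τ s (a :: w) t

/-- The visible word ᾱ of an action. -/
def obsWord {A : Type*} [DecidableEq A] (τ a : A) : List A := if a = τ then [] else [a]

/-- A (symmetric) bisimulation contained in static equivalence, closed under matching
transitions up to weak moves. -/
def IsBisimulation {S A : Type*} [DecidableEq A] (step : S → A → S → Prop) (τ : A)
    (eqv : S → S → Prop) (R : S → S → Prop) : Prop :=
  Symmetric R ∧
  ∀ X Y : S, R X Y → eqv X Y ∧
    ∀ (a : A) (X' : S), step X a X' → ∃ Y' : S, WTrace step τ Y (obsWord τ a) Y' ∧ R X' Y'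

/-- Labelled bisimilarity: the largest symmetric bisimulation (via its union
characterization: two states are bisimilar iff some bisimulation relates them). -/
def Bisimilar {S A : Type*} [DecidableEq A] (step : S → A → S → Prop) (τ : A)
    (eqv : S → S → Prop) (X Y : S) : Prop :=
  ∃ R : S → S → Prop, IsBisimulation step τ eqv R ∧ R X Y

/-- A witness of non-bisimilarity: a set `W` of pairs of statically equivalent states
such that for every `(B₀,B₁) ∈ W` there is `b ∈ {0,1}` and a transition `B_b →^α B'_b`
such that for every matching `B_{1-b} ⟹^ᾱ B'_{1-b}`, either the results are not
statically equivalent or the resulting pair is again in `W`. -/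
def IsNonBisimWitness {S A : Type*} [DecidableEq A] (step : S → A → S → Prop) (τ : A)
    (eqv : S → S → Prop) (W : Set (S × S)) : Prop :=
  (∀ p ∈ W, eqv p.1 p.2) ∧
  ∀ p ∈ W,
    (∃ (a : A) (B0' : S), step p.1 a B0' ∧
      ∀ B1' : S, WTrace step τ p.2 (obsWord τ a) B1' → ¬ eqv B0' B1' ∨ (B0', B1') ∈ W) ∨
    (∃ (a : A) (B1' : S), step p.2 a B1' ∧
      ∀ B0' : S, WTrace step τ p.1 (obsWord τ a) B0' → ¬ eqv B0' B1' ∨ (B0', B1') ∈ W)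

section Transitions

variable {S A : Type*} {step : S → A → S → Prop} {τ : A}

theorem WTrace.reflTransGen {s t : S} {w : List A} (h : WTrace step τ s w t) :
    Relation.ReflTransGen (fun y x => ∃ a, step x a y) t s := by
  induction h with
  | refl s => exact .refl
  | tau hstep _ ih => exact ih.tail ⟨_, hstep⟩
  | vis _ hstep _ ih => exact ih.tail ⟨_, hstep⟩

theorem wellFounded_of_not_exists_infinite_run
    (hwf : ¬ ∃ f : ℕ → S, ∀ n : ℕ, ∃ a : A, step (f n) a (f (n + 1))) :
    WellFounded (fun t s => ∃ a, step s a t) :=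
  wellFounded_iff_isEmpty_descending_chain.mpr ⟨fun ⟨f, hf⟩ => hwf ⟨f, hf⟩⟩

end Transitions

section Bisimilarity

variable {S A : Type*} [DecidableEq A] {step : S → A → S → Prop} {τ : A} {eqv : S → S → Prop}

namespace Bisimilar

theorem symm {X Y : S} (h : Bisimilar step τ eqv X Y) : Bisimilar step τ eqv Y X :=
  let ⟨R, hR, hXY⟩ := h
  ⟨R, hR, hR.1 hXY⟩

theorem staticEquiv {X Y : S} (h : Bisimilar step τ eqv X Y) : eqv X Y :=
  let ⟨_, hR, hXY⟩ := h
  (hR.2 X Y hXY).1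

theorem exists_wtrace {X Y X' : S} {a : A} (h : Bisimilar step τ eqv X Y)
    (hX : step X a X') :
    ∃ Y', WTrace step τ Y (obsWord τ a) Y' ∧ Bisimilar step τ eqv X' Y' :=
  let ⟨R, hR, hXY⟩ := h
  let ⟨Y', hY, hR'⟩ := (hR.2 X Y hXY).2 a X' hX
  ⟨Y', hY, R, hR, hR'⟩

end Bisimilar

theorem bisimilar_of_forall_step {X Y : S} (hXY : eqv X Y) (hYX : eqv Y X)
    (hX : ∀ a X', step X a X' →
      ∃ Y', WTrace step τ Y (obsWord τ a) Y' ∧ Bisimilar step τ eqv X' Y')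
    (hY : ∀ a Y', step Y a Y' →
      ∃ X', WTrace step τ X (obsWord τ a) X' ∧ Bisimilar step τ eqv X' Y') :
    Bisimilar step τ eqv X Y := by
  refine ⟨fun U V => Bisimilar step τ eqv U V ∨ (U = X ∧ V = Y) ∨ (U = Y ∧ V = X),
    ⟨?_, ?_⟩, Or.inr (Or.inl ⟨rfl, rfl⟩)⟩
  · rintro U V (h | ⟨rfl, rfl⟩ | ⟨rfl, rfl⟩)
    · exact Or.inl h.symm
    · exact Or.inr (Or.inr ⟨rfl, rfl⟩)
    · exact Or.inr (Or.inl ⟨rfl, rfl⟩)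
  · rintro U V (h | ⟨rfl, rfl⟩ | ⟨rfl, rfl⟩)
    · refine ⟨h.staticEquiv, fun a U' hU => ?_⟩
      obtain ⟨V', hV, hUV'⟩ := h.exists_wtrace hU
      exact ⟨V', hV, Or.inl hUV'⟩
    · refine ⟨hXY, fun a X' hX' => ?_⟩
      obtain ⟨Y', hY', hXY'⟩ := hX a X' hX'
      exact ⟨Y', hY', Or.inl hXY'⟩
    · refine ⟨hYX, fun a Y' hY' => ?_⟩
      obtain ⟨X', hX', hXY'⟩ := hY a Y' hY'
      exact ⟨X', hX', Or.inl hXY'.symm⟩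

theorem isNonBisimWitness_setOf_not_bisimilar (hsym : ∀ s t : S, eqv s t → eqv t s) :
    IsNonBisimWitness step τ eqv {p | eqv p.1 p.2 ∧ ¬ Bisimilar step τ eqv p.1 p.2} := by
  refine ⟨fun p hp => hp.1, ?_⟩
  rintro ⟨B0, B1⟩ ⟨hB, hnB⟩
  by_contra hnot
  simp only [Set.mem_ofPred_eq, not_or, not_exists, not_and, not_forall, not_not] at hnot
  obtain ⟨h0, h1⟩ := hnot
  refine hnB (bisimilar_of_forall_step hB (hsym _ _ hB) (fun a B0' hB0 => ?_) fun a B1' hB1 => ?_)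
  · obtain ⟨B1', hw, heqv, hbis⟩ := h0 a B0' hB0
    exact ⟨B1', hw, hbis heqv⟩
  · obtain ⟨B0', hw, heqv, hbis⟩ := h1 a B1' hB1
    exact ⟨B0', hw, hbis heqv⟩

theorem IsNonBisimWitness.not_bisimilar {W : Set (S × S)}
    (hwf : WellFounded (fun t s => ∃ a, step s a t)) (hW : IsNonBisimWitness step τ eqv W)
    {p : S × S} (hp : p ∈ W) : ¬ Bisimilar step τ eqv p.1 p.2 := by
  refine (hwf.transGen.prod_lex hwf).induction
    (C := fun p => p ∈ W → ¬ Bisimilar step τ eqv p.1 p.2) p ?_ hp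
  rintro ⟨B0, B1⟩ ih hp hB
  rcases hW.2 _ hp with ⟨a, B0', hB0, hall⟩ | ⟨a, B1', hB1, hall⟩
  · obtain ⟨B1', hw, hB'⟩ := hB.exists_wtrace hB0
    exact ih (B0', B1') (.left _ _ (.single ⟨a, hB0⟩))
      ((hall B1' hw).resolve_left (not_not.2 hB'.staticEquiv)) hB'
  · obtain ⟨B0', hw, hB'⟩ := hB.symm.exists_wtrace hB1
    have hmem : (B0', B1') ∈ W := (hall B0' hw).resolve_left (not_not.2 hB'.symm.staticEquiv)
    -- the weak match may stay at `B0`; then only the second component descends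
    rcases Relation.reflTransGen_iff_eq_or_transGen.mp hw.reflTransGen with rfl | hlt
    · exact ih (_, B1') (.right _ ⟨a, hB1⟩) hmem hB'.symm
    · exact ih (B0', B1') (.left _ _ hlt) hmem hB'.symm

end Bisimilarity

theorem non_bisimilarity_iff_witness_general {S A : Type*} [DecidableEq A]
    (step : S → A → S → Prop) (τ : A) (eqv : S → S → Prop)
    (hsym : ∀ s t : S, eqv s t → eqv t s)
    (hwf : ¬ ∃ f : ℕ → S, ∀ n : ℕ, ∃ a : A, step (f n) a (f (n + 1)))
    (A0 A1 : S) (heq : eqv A0 A1) :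
    ¬ Bisimilar step τ eqv A0 A1 ↔
      ∃ W : Set (S × S), (A0, A1) ∈ W ∧ IsNonBisimWitness step τ eqv W := by
  constructor
  · exact fun hnB => ⟨{p | eqv p.1 p.2 ∧ ¬ Bisimilar step τ eqv p.1 p.2}, ⟨heq, hnB⟩,
      isNonBisimWitness_setOf_not_bisimilar hsym⟩
  · rintro ⟨W, hmem, hW⟩
    exact hW.not_bisimilar (wellFounded_of_not_exists_infinite_run hwf) hmem

/-- for a finitely branching, well-founded transition system (bounded
processes) with reflexive symmetric static equivalence, two statically equivalent
states are non-bisimilar iff there is a witness of non-bisimilarity containing them. -/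
theorem non_bisimilarity_iff_witness {S A : Type*} [DecidableEq A]
    (step : S → A → S → Prop) (τ : A) (eqv : S → S → Prop)
    (hrefl : ∀ s : S, eqv s s) (hsym : ∀ s t : S, eqv s t → eqv t s)
    (hfb : ∀ s : S, {p : A × S | step s p.1 p.2}.Finite)
    (hwf : ¬ ∃ f : ℕ → S, ∀ n : ℕ, ∃ a : A, step (f n) a (f (n + 1)))
    (A0 A1 : S) (heq : eqv A0 A1) :
    ¬ Bisimilar step τ eqv A0 A1 ↔
      ∃ W : Set (S × S), (A0, A1) ∈ W ∧ IsNonBisimWitness step τ eqv W :=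
  non_bisimilarity_iff_witness_general step τ eqv hsym hwf A0 A1 heq
end

section
/- Under the same well-foundedness hypotheses, A₀ does not simulate-precede A₁ (A₀ ⋢ A₁) with A₀ ∼ A₁ if and only if there exists a witness of non-simulation for (A₀, A₁): a set W of pairs of statically equivalent states such that for every (B₀, B₁) ∈ W there is a transition B₀ →^α B'₀ such that for every B₁ ⟹^ᾱ B'₁, either B'₀ ≁ B'₁ or (B'₀, B'₁) ∈ W. -/
/-- A simulation contained in static equivalence. -/
def IsSimulation {S A : Type*} [DecidableEq A] (step : S → A → S → Prop) (τ : A)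
    (eqv : S → S → Prop) (R : S → S → Prop) : Prop :=
  ∀ X Y : S, R X Y → eqv X Y ∧
    ∀ (a : A) (X' : S), step X a X' → ∃ Y' : S, WTrace step τ Y (obsWord τ a) Y' ∧ R X' Y'

/-- The simulation preorder ⊑ : the largest simulation (union characterization). -/
def SimPreorder {S A : Type*} [DecidableEq A] (step : S → A → S → Prop) (τ : A)
    (eqv : S → S → Prop) (X Y : S) : Prop :=
  ∃ R : S → S → Prop, IsSimulation step τ eqv R ∧ R X Y

/-- A witness of non-simulation: a set `W` of pairs of statically equivalent states
such that for every `(B₀,B₁) ∈ W` there is a transition `B₀ →^α B'₀` such that for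
every matching `B₁ ⟹^ᾱ B'₁`, either `B'₀ ≁ B'₁` or `(B'₀,B'₁) ∈ W`. -/
def IsNonSimWitness {S A : Type*} [DecidableEq A] (step : S → A → S → Prop) (τ : A)
    (eqv : S → S → Prop) (W : Set (S × S)) : Prop :=
  (∀ p ∈ W, eqv p.1 p.2) ∧
  ∀ p ∈ W, ∃ (a : A) (B0' : S), step p.1 a B0' ∧
    ∀ B1' : S, WTrace step τ p.2 (obsWord τ a) B1' → ¬ eqv B0' B1' ∨ (B0', B1') ∈ W

/-
The pairs `(B₀, B₁)` with `B₀ ∼ B₁` and `B₀ ⋢ B₁` always form a witness: if one of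
them had every move of `B₀` answered by a move of `B₁` into `⊑`, adding that pair to `⊑` would
give a larger simulation. Conversely, a simulation `R` meeting a witness `W` in `(A₀, A₁)` keeps
meeting it along a move of the first component chosen by `W`, since answers in `R` are statically
equivalent; well-founded induction on that component rules this out.
-/

section Simulation

variable {S A : Type*} [DecidableEq A] {step : S → A → S → Prop} {τ : A} {eqv : S → S → Prop}

theorem isSimulation_simPreorder : IsSimulation step τ eqv (SimPreorder step τ eqv) := by
  rintro X Y ⟨R, hR, hXY⟩
  refine ⟨(hR X Y hXY).1, fun a X' hstep => ?_⟩
  obtain ⟨Y', htrace, hR'⟩ := (hR X Y hXY).2 a X' hstep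
  exact ⟨Y', htrace, R, hR, hR'⟩

theorem simPreorder_of_forall_step {X Y : S} (hXY : eqv X Y)
    (hmatch : ∀ (a : A) (X' : S), step X a X' →
      ∃ Y' : S, WTrace step τ Y (obsWord τ a) Y' ∧ SimPreorder step τ eqv X' Y') :
    SimPreorder step τ eqv X Y := by
  refine ⟨fun U V => SimPreorder step τ eqv U V ∨ (U = X ∧ V = Y), ?_, Or.inr ⟨rfl, rfl⟩⟩
  rintro U V (hUV | ⟨rfl, rfl⟩)
  · obtain ⟨heqv, hstep⟩ := isSimulation_simPreorder U V hUV
    refine ⟨heqv, fun a U' hU => ?_⟩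
    obtain ⟨V', htrace, hV'⟩ := hstep a U' hU
    exact ⟨V', htrace, Or.inl hV'⟩
  · refine ⟨hXY, fun a U' hU => ?_⟩
    obtain ⟨V', htrace, hV'⟩ := hmatch a U' hU
    exact ⟨V', htrace, Or.inl hV'⟩

theorem isNonSimWitness_setOf_not_simPreorder :
    IsNonSimWitness step τ eqv {p | eqv p.1 p.2 ∧ ¬ SimPreorder step τ eqv p.1 p.2} := by
  refine ⟨fun p hp => hp.1, ?_⟩
  rintro ⟨B0, B1⟩ ⟨heqv, hnot⟩
  by_contra! hmatch
  refine hnot (simPreorder_of_forall_step heqv fun a B0' hstep => ?_)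
  obtain ⟨B1', htrace, heqv', hsim⟩ := hmatch a B0' hstep
  exact ⟨B1', htrace, not_not.mp fun h => hsim ⟨heqv', h⟩⟩

theorem IsNonSimWitness.not_simPreorder (hwf : WellFounded fun Y X => ∃ a, step X a Y)
    {W : Set (S × S)} (hW : IsNonSimWitness step τ eqv W) {p : S × S} (hp : p ∈ W) :
    ¬ SimPreorder step τ eqv p.1 p.2 := by
  rintro ⟨R, hR, hRp⟩
  obtain ⟨B0, B1⟩ := p
  induction B0 using hwf.induction generalizing B1 with
  | _ B0 ih =>
    obtain ⟨a, B0', hstep, hW'⟩ := hW.2 _ hp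
    obtain ⟨B1', htrace, hR'⟩ := (hR B0 B1 hRp).2 a B0' hstep
    have hmem : (B0', B1') ∈ W := (hW' B1' htrace).resolve_left (not_not.mpr (hR B0' B1' hR').1)
    exact ih B0' ⟨a, hstep⟩ B1' hmem hR'

end Simulation

theorem non_simulation_iff_witness_general {S A : Type*} [DecidableEq A]
    (step : S → A → S → Prop) (τ : A) (eqv : S → S → Prop)
    (hwf : ¬ ∃ f : ℕ → S, ∀ n : ℕ, ∃ a : A, step (f n) a (f (n + 1)))
    (A0 A1 : S) (heq : eqv A0 A1) :
    ¬ SimPreorder step τ eqv A0 A1 ↔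
      ∃ W : Set (S × S), (A0, A1) ∈ W ∧ IsNonSimWitness step τ eqv W := by
  refine ⟨fun hnot => ⟨{p | eqv p.1 p.2 ∧ ¬ SimPreorder step τ eqv p.1 p.2}, ⟨heq, hnot⟩,
    isNonSimWitness_setOf_not_simPreorder⟩, ?_⟩
  rintro ⟨W, hmem, hW⟩
  have hstepWF : WellFounded fun Y X => ∃ a, step X a Y :=
    wellFounded_iff_isEmpty_descending_chain.mpr ⟨fun f => hwf ⟨f.1, f.2⟩⟩
  exact hW.not_simPreorder hstepWF hmem

/-- under the same well-foundedness (bounded processes) hypotheses,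
`A₀` does not simulate-precede `A₁` (with `A₀ ∼ A₁`) iff there is a witness of
non-simulation for `(A₀, A₁)`. -/
theorem non_simulation_iff_witness {S A : Type*} [DecidableEq A]
    (step : S → A → S → Prop) (τ : A) (eqv : S → S → Prop)
    (hrefl : ∀ s : S, eqv s s) (hsym : ∀ s t : S, eqv s t → eqv t s)
    (hfb : ∀ s : S, {p : A × S | step s p.1 p.2}.Finite)
    (hwf : ¬ ∃ f : ℕ → S, ∀ n : ℕ, ∃ a : A, step (f n) a (f (n + 1)))
    (A0 A1 : S) (heq : eqv A0 A1) :
    ¬ SimPreorder step τ eqv A0 A1 ↔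
      ∃ W : Set (S × S), (A0, A1) ∈ W ∧ IsNonSimWitness step τ eqv W :=
  non_simulation_iff_witness_general step τ eqv hwf A0 A1 heq
end

section
/- Let X be a set of second-order variables each carrying a type i ∈ ℕ, where a variable of type i may only be instantiated by terms over the signature, constants, axioms ax₁,…,ax_i and variables of type ≤ i. Then the typed unification algorithm on second-order equations terminates: the measure μ(E) = (set of second-order variables of E ordered by multiset extension of the type order, multiset of variable occurrences of E, multiset of equation sizes of E), ordered lexicographically, strictly decreases at each recursive call of the algorithm. -/
/-!
Retyping trades a variable `Y^j` for a fresh `Z^i` with `i < j`, and eliminating `X ≐ ξ`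
with `X ∉ ξ` removes `X` without adding variables, so both shrink the first component.
Eliminating the trivial `X ≐ X` keeps or shrinks the variable set and deletes two
occurrences, and decomposition leaves the occurrences unchanged while replacing an
equation by strictly smaller ones.
-/

/-- Second-order terms over a signature `F`: axioms `ax_k`, typed variables `X^i`
(a name `n` together with a type `i : ℕ`), constants and binary function symbols. -/
inductive STm (F : Type*) : Type _
  | ax : ℕ → STm F
  | var : ℕ → ℕ → STm F
  | cst : F → STm F
  | app : F → STm F → STm F → STm F

namespace STm

variable {F : Type*}

/-- Multiset of variable occurrences (name, type) of a term. -/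
def varOccs : STm F → Multiset (ℕ × ℕ)
  | .ax _ => 0
  | .var n i => {(n, i)}
  | .cst _ => 0
  | .app _ a b => varOccs a + varOccs b

/-- Multiset of axiom indices occurring in a term. -/
def axOccs : STm F → Multiset ℕ
  | .ax k => {k}
  | .var _ _ => 0
  | .cst _ => 0
  | .app _ a b => axOccs a + axOccs b

/-- Number of function symbols of a term. -/
def fsize : STm F → ℕ
  | .ax _ => 0
  | .var _ _ => 0
  | .cst _ => 1
  | .app _ a b => fsize a + fsize b + 1

/-- `maxar ξ`: the minimal `i` with `ξ ∈ R_i`, i.e. the maximum of the axiom indices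
and variable types occurring in `ξ`. -/
def maxar : STm F → ℕ
  | .ax k => k
  | .var _ i => i
  | .cst _ => 0
  | .app _ a b => max (maxar a) (maxar b)

/-- Substitute the single variable `v` by the term `r`. -/
def sub1 (v : ℕ × ℕ) (r : STm F) : STm F → STm F
  | .ax k => .ax k
  | .var n i => if (n, i) = v then r else .var n i
  | .cst f => .cst f
  | .app f a b => .app f (sub1 v r a) (sub1 v r b)

/-- `ξ` is a variable. -/
def isVar (t : STm F) : Prop := ∃ n i : ℕ, t = STm.var n i

/-- Occurs-check failure: `X^{n,i}` occurs in `ξ` and `ξ ≠ X`. -/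
def occursBad (n i : ℕ) (ξ : STm F) : Prop :=
  (n, i) ∈ varOccs ξ ∧ ξ ≠ STm.var n i

end STm

/-- A system of second-order equations. -/
abbrev EqSys (F : Type*) := List (STm F × STm F)

/-- Substitute the variable `v` by `r` throughout an equation system. -/
def subEqs {F : Type*} (v : ℕ × ℕ) (r : STm F) (E : EqSys F) : EqSys F :=
  E.map (fun e => (STm.sub1 v r e.1, STm.sub1 v r e.2))

/-- Multiset of all variable occurrences of an equation system. -/
def eqVarOccs {F : Type*} (E : EqSys F) : Multiset (ℕ × ℕ) :=
  (E.map (fun e => STm.varOccs e.1 + STm.varOccs e.2)).sum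

/-- The (finite) set of second-order variables of an equation system. -/
def sysVarSet {F : Type*} (E : EqSys F) : Finset (ℕ × ℕ) := (eqVarOccs E).toFinset

/-- The recursive calls of the typed second-order unification algorithm `mgu`:
decomposition of equal root symbols, retyping of a higher-typed variable occurring in
the right-hand side of a variable equation by a fresh lower-typed variable, and
variable elimination (the failure cases produce no recursive call). -/
inductive MguStep (F : Type*) : EqSys F → EqSys F → Prop
  | decompApp (f : F) (a b c d : STm F) (φ : EqSys F) :
      MguStep F ((STm.app f a b, STm.app f c d) :: φ) ((a, c) :: (b, d) :: φ)
  | decompCst (f : F) (φ : EqSys F) :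
      MguStep F ((STm.cst f, STm.cst f) :: φ) φ
  | decompAx (k : ℕ) (φ : EqSys F) :
      MguStep F ((STm.ax k, STm.ax k) :: φ) φ
  | retype (n i : ℕ) (ξ : STm F) (m j m' : ℕ) (φ : EqSys F)
      (hocc : ¬ STm.occursBad n i ξ)
      (hax : ∀ k ∈ STm.axOccs ξ, k ≤ i)
      (hnv : ¬ STm.isVar ξ)
      (hmem : (m, j) ∈ STm.varOccs ξ) (hij : i < j)
      (hfresh : ∀ k : ℕ, (m', k) ∉ sysVarSet ((STm.var n i, ξ) :: φ)) :
      MguStep F ((STm.var n i, ξ) :: φ)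
        (subEqs (m, j) (STm.var m' i) ((STm.var n i, ξ) :: φ))
  | elim (n i : ℕ) (ξ : STm F) (φ : EqSys F)
      (hocc : ¬ STm.occursBad n i ξ)
      (hty : STm.maxar ξ ≤ i) :
      MguStep F ((STm.var n i, ξ) :: φ) (subEqs (n, i) ξ φ)

/-- The (Dershowitz–Manna) multiset extension of `<` on `ℕ`. -/
def DMLt (s t : Multiset ℕ) : Prop :=
  ∃ X Y Z : Multiset ℕ, X ≠ 0 ∧ t = Z + X ∧ s = Z + Y ∧ ∀ y ∈ Y, ∃ x ∈ X, y < x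

/-- First measure component: the set of second-order variables of `E`, compared by the
multiset extension of the type order (i.e. as the multiset of their types). -/
def mu1 {F : Type*} (E : EqSys F) : Multiset ℕ := (sysVarSet E).val.map Prod.snd

/-- Second measure component: the multiset of variable occurrences of `E` (with
multiplicity), compared via their types. -/
def mu2 {F : Type*} (E : EqSys F) : Multiset ℕ := (eqVarOccs E).map Prod.snd

/-- Third measure component: the multiset of the sizes of the equations of `E`. -/
def mu3 {F : Type*} (E : EqSys F) : Multiset ℕ :=
  ↑(E.map (fun e => STm.fsize e.1 + STm.fsize e.2))

/-- Lexicographic composition of the three multiset orders. -/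
def MeasureLt {F : Type*} (E' E : EqSys F) : Prop :=
  DMLt (mu1 E') (mu1 E) ∨
    (mu1 E' = mu1 E ∧
      (DMLt (mu2 E') (mu2 E) ∨ (mu2 E' = mu2 E ∧ DMLt (mu3 E') (mu3 E))))

namespace STm

variable {F : Type*}

theorem varOccs_sub1 (v : ℕ × ℕ) (r t : STm F) :
    (sub1 v r t).varOccs = t.varOccs.bind fun w => if w = v then r.varOccs else {w} := by
  induction t with
  | ax k => simp [sub1, varOccs]
  | var n i => by_cases h : (n, i) = v <;> simp [sub1, varOccs, h]
  | cst f => simp [sub1, varOccs]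
  | app f a b iha ihb => simp [sub1, varOccs, iha, ihb, Multiset.add_bind]

end STm

section VariableOccurrences

variable {F : Type*}

theorem eqVarOccs_cons (e : STm F × STm F) (E : EqSys F) :
    eqVarOccs (e :: E) = e.1.varOccs + e.2.varOccs + eqVarOccs E := by
  simp [eqVarOccs]

theorem mem_sysVarSet {E : EqSys F} {w : ℕ × ℕ} : w ∈ sysVarSet E ↔ w ∈ eqVarOccs E :=
  Multiset.mem_toFinset

theorem eqVarOccs_subEqs (v : ℕ × ℕ) (r : STm F) (E : EqSys F) :
    eqVarOccs (subEqs v r E) =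
      (eqVarOccs E).bind fun w => if w = v then r.varOccs else {w} := by
  induction E with
  | nil => simp [eqVarOccs, subEqs]
  | cons e E ih =>
    change eqVarOccs ((STm.sub1 v r e.1, STm.sub1 v r e.2) :: subEqs v r E) = _
    simp [eqVarOccs_cons, ih, STm.varOccs_sub1, Multiset.add_bind]

theorem eqVarOccs_subEqs_var (v : ℕ × ℕ) (m k : ℕ) (E : EqSys F) :
    eqVarOccs (subEqs v (.var m k) E) =
      (eqVarOccs E).map fun w => if w = v then (m, k) else w := by
  rw [eqVarOccs_subEqs, ← Multiset.bind_singleton]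
  congr 1
  funext w
  split_ifs <;> rfl

theorem eqVarOccs_subEqs_self (v : ℕ × ℕ) (E : EqSys F) :
    eqVarOccs (subEqs v (.var v.1 v.2) E) = eqVarOccs E := by
  rw [eqVarOccs_subEqs_var]
  refine (Multiset.map_congr rfl fun w _ => ?_).trans (Multiset.map_id' _)
  split_ifs with h
  exacts [h.symm, rfl]

theorem mem_eqVarOccs_subEqs {v w : ℕ × ℕ} {r : STm F} {E : EqSys F}
    (hw : w ∈ eqVarOccs (subEqs v r E)) : w ∈ r.varOccs ∨ (w ∈ eqVarOccs E ∧ w ≠ v) := by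
  rw [eqVarOccs_subEqs, Multiset.mem_bind] at hw
  obtain ⟨u, hu, hw⟩ := hw
  split_ifs at hw with huv
  · exact .inl hw
  · rw [Multiset.mem_singleton.mp hw]
    exact .inr ⟨hu, huv⟩

theorem sysVarSet_subEqs_ssubset {v : ℕ × ℕ} {r : STm F} (hv : v ∉ r.varOccs)
    (E : EqSys F) : sysVarSet (subEqs v r E) ⊂ sysVarSet ((.var v.1 v.2, r) :: E) := by
  have hsub : sysVarSet (subEqs v r E) ⊆ sysVarSet ((.var v.1 v.2, r) :: E) := by
    intro w hw
    simp only [mem_sysVarSet, eqVarOccs_cons, Multiset.mem_add] at hw ⊢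
    rcases mem_eqVarOccs_subEqs hw with hr | ⟨hE, -⟩
    · exact .inl (.inr hr)
    · exact .inr hE
  refine (Finset.ssubset_iff_of_subset hsub).mpr ⟨v, ?_, fun hv' => ?_⟩
  · simp [mem_sysVarSet, eqVarOccs_cons, STm.varOccs]
  · rcases mem_eqVarOccs_subEqs (mem_sysVarSet.mp hv') with hr | ⟨-, hne⟩
    · exact hv hr
    · exact hne rfl

theorem sysVarSet_subEqs_rename {v : ℕ × ℕ} {m k : ℕ} {E : EqSys F}
    (hv : v ∈ sysVarSet E) :
    sysVarSet (subEqs v (.var m k) E) = insert (m, k) ((sysVarSet E).erase v) := by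
  set g : ℕ × ℕ → ℕ × ℕ := fun w => if w = v then (m, k) else w
  have hid : ∀ w ∈ (sysVarSet E).erase v, g w = w := fun w hw =>
    if_neg (Finset.ne_of_mem_erase hw)
  calc sysVarSet (subEqs v (.var m k) E)
      = (sysVarSet E).image g := by
        rw [sysVarSet, eqVarOccs_subEqs_var, Multiset.toFinset_map, sysVarSet]
    _ = (insert v ((sysVarSet E).erase v)).image g := by rw [Finset.insert_erase hv]
    _ = insert (m, k) ((sysVarSet E).erase v) := by
        rw [Finset.image_insert, Finset.image_congr hid, Finset.image_id']
        simp [g]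

end VariableOccurrences

theorem DMLt.of_lt {s t : Multiset ℕ} (h : s < t) : DMLt s t := by
  refine ⟨t - s, 0, s, ?_, (add_tsub_cancel_of_le h.le).symm, (add_zero s).symm, by simp⟩
  exact fun h0 => h.not_ge (tsub_eq_zero_iff_le.mp h0)

theorem DMLt.add_cons {x : ℕ} {Y : Multiset ℕ} (hY : ∀ y ∈ Y, y < x) (Z : Multiset ℕ) :
    DMLt (Y + Z) (x ::ₘ Z) := by
  refine ⟨{x}, Y, Z, Multiset.singleton_ne_zero x, ?_, add_comm Y Z, fun y hy => ?_⟩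
  · rw [add_comm, Multiset.singleton_add]
  · exact ⟨x, Multiset.mem_singleton_self x, hY y hy⟩

section Measure

variable {F : Type*}

theorem measureLt_of_sysVarSet_ssubset {E' E : EqSys F} (h : sysVarSet E' ⊂ sysVarSet E) :
    MeasureLt E' E :=
  .inl (.of_lt (Multiset.map_lt_map (Finset.val_lt_iff.mpr h)))

theorem measureLt_of_eqVarOccs_lt {E' E : EqSys F} (h : eqVarOccs E' < eqVarOccs E) :
    MeasureLt E' E := by
  have hsub : sysVarSet E' ⊆ sysVarSet E :=
    Multiset.toFinset_subset.mpr (Multiset.subset_of_le h.le)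
  rcases hsub.eq_or_ssubset with heq | hss
  · exact .inr ⟨by rw [mu1, mu1, heq], .inl (.of_lt (Multiset.map_lt_map h))⟩
  · exact measureLt_of_sysVarSet_ssubset hss

theorem measureLt_of_eqVarOccs_eq {E' E : EqSys F} (h : eqVarOccs E' = eqVarOccs E)
    (h3 : DMLt (mu3 E') (mu3 E)) : MeasureLt E' E :=
  .inr ⟨by rw [mu1, mu1, sysVarSet, sysVarSet, h], .inr ⟨by rw [mu2, mu2, h], h3⟩⟩

theorem mu3_cons (e : STm F × STm F) (E : EqSys F) :
    mu3 (e :: E) = (e.1.fsize + e.2.fsize) ::ₘ mu3 E := by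
  simp [mu3]

theorem measureLt_of_cons_varOccs_eq_zero {e : STm F × STm F}
    (he : e.1.varOccs + e.2.varOccs = 0) (E : EqSys F) : MeasureLt E (e :: E) := by
  refine measureLt_of_eqVarOccs_eq (by rw [eqVarOccs_cons, he, zero_add]) ?_
  rw [mu3_cons]
  exact .of_lt (Multiset.lt_cons_self _ _)

theorem measureLt_subEqs_var_self (v : ℕ × ℕ) (E : EqSys F) :
    MeasureLt (subEqs v (.var v.1 v.2) E) ((.var v.1 v.2, .var v.1 v.2) :: E) := by
  refine measureLt_of_eqVarOccs_lt ?_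
  rw [eqVarOccs_subEqs_self, eqVarOccs_cons]
  simpa [STm.varOccs] using (Multiset.lt_cons_self _ _).trans (Multiset.lt_cons_self _ _)

theorem measureLt_decompApp (f : F) (a b c d : STm F) (E : EqSys F) :
    MeasureLt ((a, c) :: (b, d) :: E) ((.app f a b, .app f c d) :: E) := by
  refine measureLt_of_eqVarOccs_eq ?_ ?_
  · simp only [eqVarOccs_cons, STm.varOccs]
    abel
  · have hY : ∀ y ∈ ({a.fsize + c.fsize, b.fsize + d.fsize} : Multiset ℕ),
        y < (STm.app f a b).fsize + (STm.app f c d).fsize := by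
      simp only [STm.fsize, Multiset.insert_eq_cons, Multiset.mem_cons,
        Multiset.mem_singleton]
      omega
    simpa [mu3_cons] using DMLt.add_cons hY (mu3 E)

theorem measureLt_subEqs_rename {v : ℕ × ℕ} {m k : ℕ} {E : EqSys F}
    (hv : v ∈ sysVarSet E) (hfresh : (m, k) ∉ sysVarSet E) (hk : k < v.2) :
    MeasureLt (subEqs v (.var m k) E) E := by
  have hrest : (m, k) ∉ (sysVarSet E).erase v := fun h => hfresh (Finset.mem_of_mem_erase h)
  refine .inl ?_
  rw [mu1, mu1, sysVarSet_subEqs_rename hv, Finset.insert_val_of_notMem hrest,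
    ← Finset.insert_erase hv, Finset.insert_val_of_notMem (Finset.notMem_erase v _),
    Finset.erase_insert (Finset.notMem_erase v _), Multiset.map_cons, Multiset.map_cons,
    ← Multiset.singleton_add]
  exact DMLt.add_cons (by simpa using hk) _

end Measure

/-- the typed second-order unification algorithm terminates: the measure
μ(E) = (variable set ordered by the multiset extension of the type order, multiset of
variable occurrences, multiset of equation sizes), ordered lexicographically, strictly
decreases at each recursive call of the algorithm. -/
theorem mgu_measure_decreases {F : Type*} (E E' : EqSys F) (h : MguStep F E E') :
    MeasureLt E' E := by
  cases h with
  | decompApp f a b c d φ => exact measureLt_decompApp f a b c d φ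
  | decompCst f => exact measureLt_of_cons_varOccs_eq_zero (e := (.cst f, .cst f)) rfl E'
  | decompAx k => exact measureLt_of_cons_varOccs_eq_zero (e := (.ax k, .ax k)) rfl E'
  | retype n i ξ m j m' φ _ _ _ hmem hij hfresh =>
    have hv : (m, j) ∈ sysVarSet ((.var n i, ξ) :: φ) := by
      simp [mem_sysVarSet, eqVarOccs_cons, hmem]
    exact measureLt_subEqs_rename hv (hfresh i) hij
  | elim n i ξ φ hocc _ =>
    by_cases hin : (n, i) ∈ ξ.varOccs
    · obtain rfl : ξ = .var n i := not_not.mp fun hne => hocc ⟨hin, hne⟩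
      exact measureLt_subEqs_var_self (n, i) φ
    · exact measureLt_of_sysVarSet_ssubset (sysVarSet_subEqs_ssubset hin φ)
end

section
/- Transitivity of consequence: let S, S' be sets of solved deduction facts, φ = {X_i ⊢ u_i}_{i=1}^n with pairwise distinct variables X_i, and (ξ, t) ∈ conseq(S ∪ φ). If Σ and σ are substitutions such that for every i, (X_i Σ, u_i σ) ∈ conseq(SΣσ ∪ S'), then (ξΣ, tσ) ∈ conseq(SΣσ ∪ S'). -/
/-- First-order (constructor) terms. -/
inductive FOTm (Fc C N V : Type*) : Type _
  | var : V → FOTm Fc C N V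
  | nm : N → FOTm Fc C N V
  | cst : C → FOTm Fc C N V
  | app : Fc → FOTm Fc C N V → FOTm Fc C N V → FOTm Fc C N V

/-- Recipes (second-order terms). -/
inductive Rcp (Fc Fd C A W : Type*) : Type _
  | var : W → Rcp Fc Fd C A W
  | ax : A → Rcp Fc Fd C A W
  | cst : C → Rcp Fc Fd C A W
  | capp : Fc → Rcp Fc Fd C A W → Rcp Fc Fd C A W → Rcp Fc Fd C A W
  | dapp : Fd → Rcp Fc Fd C A W → Rcp Fc Fd C A W → Rcp Fc Fd C A W

/-- Homomorphic application of a first-order substitution. -/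
def FOTm.substT {Fc C N V : Type*} (σ : V → FOTm Fc C N V) :
    FOTm Fc C N V → FOTm Fc C N V
  | .var x => σ x
  | .nm n => .nm n
  | .cst c => .cst c
  | .app f a b => .app f (a.substT σ) (b.substT σ)

/-- Homomorphic application of a second-order substitution to a recipe. -/
def Rcp.substR {Fc Fd C A W : Type*} (sb : W → Rcp Fc Fd C A W) :
    Rcp Fc Fd C A W → Rcp Fc Fd C A W
  | .var X => sb X
  | .ax a => .ax a
  | .cst c => .cst c
  | .capp f a b => .capp f (a.substR sb) (b.substR sb)
  | .dapp f a b => .dapp f (a.substR sb) (b.substR sb)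

/-- `conseq S`: closure of the deduction facts `S` under constructor contexts. -/
inductive Conseq {Fc Fd C A W N V : Type*}
    (S : Set (Rcp Fc Fd C A W × FOTm Fc C N V)) :
    Rcp Fc Fd C A W → FOTm Fc C N V → Prop
  | base {ξ : Rcp Fc Fd C A W} {t : FOTm Fc C N V} : (ξ, t) ∈ S → Conseq S ξ t
  | cst (c : C) : Conseq S (Rcp.cst c) (FOTm.cst c)
  | capp (f : Fc) {ξ₁ ξ₂ : Rcp Fc Fd C A W} {t₁ t₂ : FOTm Fc C N V} :
      Conseq S ξ₁ t₁ → Conseq S ξ₂ t₂ →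
      Conseq S (Rcp.capp f ξ₁ ξ₂) (FOTm.app f t₁ t₂)

/-- `SΣσ`: application of the second-order substitution `Σ` to the recipes and of the
first-order substitution `σ` to the terms of the facts of `S`. -/
def imageSub {Fc Fd C A W N V : Type*}
    (S : Set (Rcp Fc Fd C A W × FOTm Fc C N V))
    (sb : W → Rcp Fc Fd C A W) (σ : V → FOTm Fc C N V) :
    Set (Rcp Fc Fd C A W × FOTm Fc C N V) :=
  (fun p : Rcp Fc Fd C A W × FOTm Fc C N V => (p.1.substR sb, p.2.substT σ)) '' S

theorem Conseq.subst {Fc Fd C A W N V : Type*}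
    {T U : Set (Rcp Fc Fd C A W × FOTm Fc C N V)}
    {sb : W → Rcp Fc Fd C A W} {σ : V → FOTm Fc C N V}
    (hT : ∀ p ∈ T, Conseq U (p.1.substR sb) (p.2.substT σ))
    {ξ : Rcp Fc Fd C A W} {t : FOTm Fc C N V} (h : Conseq T ξ t) :
    Conseq U (ξ.substR sb) (t.substT σ) := by
  induction h with
  | base hmem => exact hT _ hmem
  | cst c => exact Conseq.cst c
  | capp f _ _ ih₁ ih₂ => exact Conseq.capp f ih₁ ih₂

theorem conseq_trans_general {Fc Fd C A W N V : Type*}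
    (S S' : Set (Rcp Fc Fd C A W × FOTm Fc C N V))
    (n : ℕ) (X : Fin n → W) (u : Fin n → FOTm Fc C N V)
    (sb : W → Rcp Fc Fd C A W) (σ : V → FOTm Fc C N V)
    (ξ : Rcp Fc Fd C A W) (t : FOTm Fc C N V)
    (h : Conseq (S ∪ {p | ∃ i : Fin n, p = (Rcp.var (X i), u i)}) ξ t)
    (hX : ∀ i : Fin n, Conseq (imageSub S sb σ ∪ S') (sb (X i)) ((u i).substT σ)) :
    Conseq (imageSub S sb σ ∪ S') (ξ.substR sb) (t.substT σ) := by
  refine h.subst ?_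
  rintro p (hpS | ⟨i, rfl⟩)
  · exact Conseq.base (Or.inl ⟨p, hpS, rfl⟩)
  · exact hX i

/-- transitivity of consequence. Let `S`, `S'` be sets of solved
deduction facts, `φ = {X_i ⊢ u_i}` with pairwise distinct variables `X_i`, and
`(ξ, t) ∈ conseq(S ∪ φ)`. If, for every `i`, `(X_i Σ, u_i σ) ∈ conseq(SΣσ ∪ S')`,
then `(ξΣ, tσ) ∈ conseq(SΣσ ∪ S')`. -/
theorem conseq_trans {Fc Fd C A W N V : Type*}
    (S S' : Set (Rcp Fc Fd C A W × FOTm Fc C N V))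
    (hS : ∀ p ∈ S, ∀ (f : Fc) (a b : Rcp Fc Fd C A W), p.1 ≠ Rcp.capp f a b)
    (hS' : ∀ p ∈ S', ∀ (f : Fc) (a b : Rcp Fc Fd C A W), p.1 ≠ Rcp.capp f a b)
    (n : ℕ) (X : Fin n → W) (u : Fin n → FOTm Fc C N V)
    (hinj : Function.Injective X)
    (sb : W → Rcp Fc Fd C A W) (σ : V → FOTm Fc C N V)
    (ξ : Rcp Fc Fd C A W) (t : FOTm Fc C N V)
    (h : Conseq (S ∪ {p | ∃ i : Fin n, p = (Rcp.var (X i), u i)}) ξ t)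
    (hX : ∀ i : Fin n, Conseq (imageSub S sb σ ∪ S') (sb (X i)) ((u i).substT σ)) :
    Conseq (imageSub S sb σ ∪ S') (ξ.substR sb) (t.substT σ) :=
  conseq_trans_general S S' n X u sb σ ξ t h hX
end
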